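/- Every permutation u ∈ S_n admits a unique tuple (j_1, j_2, …, j_{n−1}) with 0 ≤ j_m ≤ m for each m, such that u = u_{j_{n−1}}^{(n−1)} ⋯ u_{j_2}^{(2)} u_{j_1}^{(1)} and ℓ(u) = j_1 + j_2 + ⋯ + j_{n−1}, where u_j^{(m)} = s_{m−j+1} ⋯ s_{m−1} s_m and u_0^{(m)} = id. -/

import Mathlib

/-- The adjacent transposition `s_i = (i, i+1)` of `S_n` (for `1 ≤ i ≤ n-1`),
realized as a permutation of `Fin n` using 0-indexed positions: it swaps
positions `i-1` and `i`. -/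
def s (n : ℕ) [NeZero n] (i : ℕ) : Equiv.Perm (Fin n) :=
  Equiv.swap (Fin.ofNat n (i - 1 : ℕ)) (Fin.ofNat n (i : ℕ))

/-- The product `s_1 s_2 ⋯ s_{n-1}`, taken left to right. -/
def c (n : ℕ) [NeZero n] : Equiv.Perm (Fin n) :=
  ((List.range (n - 1)).map (fun i => s n (i + 1))).prod

/-- The inversion number (Coxeter length) of a permutation of `Fin n`. -/
def len {n : ℕ} (u : Equiv.Perm (Fin n)) : ℕ :=
  (Finset.univ.filter (fun p : Fin n × Fin n => p.1 < p.2 ∧ u p.2 < u p.1)).card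

/-- The word `u_j^{(m)} = s_{m-j+1} s_{m-j+2} ⋯ s_m` (product of `j` consecutive
adjacent transpositions, left to right; `u_0^{(m)} = 1`). -/
def uu (n : ℕ) [NeZero n] (m j : ℕ) : Equiv.Perm (Fin n) :=
  ((List.range j).map (fun t => s n (m - j + 1 + t))).prod

/-
Positions are 0-indexed, so `uu n m d` is the cycle sending position `m` to `m - d` and shifting
`m - d, …, m - 1` up by one. Hence if `u` fixes every position above `m`, the last factor of its
factorization is forced to be `uu n m (m - u m)`, and `(uu n m (m - u m))⁻¹ * u` fixes every
position from `m` on; induction on `m` gives existence and uniqueness. For the length, multiplying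
a permutation `v` of the positions below `m` by `uu n m d` is a chain of `d` adjacent
transpositions, each of which swaps two values whose preimages are in increasing order and so
creates exactly one inversion.
-/

open Equiv

section

variable {n : ℕ}

lemma val_apply_lt_of_forall_le_apply_eq {m : ℕ} {v : Perm (Fin n)}
    (hv : ∀ x : Fin n, m ≤ (x : ℕ) → v x = x) {x : Fin n} (hx : (x : ℕ) < m) :
    (v x : ℕ) < m := by
  by_contra! h
  have := v.injective (hv (v x) h)
  omega

lemma swap_apply_lt_swap_apply_iff {a b x y : Fin n} (hab : (b : ℕ) = a + 1) :
    swap a b y < swap a b x ↔ y < x ∧ ¬(y = a ∧ x = b) ∨ x = a ∧ y = b := by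
  rw [swap_apply_def, swap_apply_def]
  simp only [Fin.lt_def, Fin.ext_iff] at *
  split_ifs <;> omega

lemma len_swap_mul {u : Perm (Fin n)} {a b p q : Fin n} (hab : (b : ℕ) = a + 1)
    (hp : u p = a) (hq : u q = b) (hpq : p < q) :
    len (swap a b * u) = len u + 1 := by
  subst hp hq
  unfold len
  rw [← Finset.card_insert_of_notMem (a := (p, q))]
  · congr 1
    ext ⟨x, y⟩
    simp only [Finset.mem_filter, Finset.mem_univ, true_and, Finset.mem_insert, Prod.mk.injEq,
      Perm.mul_apply, swap_apply_lt_swap_apply_iff hab, u.injective.eq_iff]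
    constructor
    · rintro ⟨hxy, h | ⟨rfl, rfl⟩⟩
      · exact Or.inr ⟨hxy, h.1⟩
      · exact Or.inl ⟨rfl, rfl⟩
    · rintro (⟨rfl, rfl⟩ | ⟨hxy, h⟩)
      · exact ⟨hpq, Or.inr ⟨rfl, rfl⟩⟩
      · refine ⟨hxy, Or.inl ⟨h, ?_⟩⟩
        rintro ⟨rfl, rfl⟩
        exact lt_asymm hxy hpq
  · simp only [Finset.mem_filter, not_and, not_lt]
    intro _ _
    omega

variable [NeZero n]

lemma s_eq_swap {i : ℕ} (hi : i < n) : s n i = swap ⟨i - 1, by omega⟩ ⟨i, hi⟩ := by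
  simp only [s, Fin.ofNat, Nat.mod_eq_of_lt hi, Nat.mod_eq_of_lt (show i - 1 < n by omega)]

lemma uu_zero (m : ℕ) : uu n m 0 = 1 := rfl

lemma uu_succ {m d : ℕ} (hd : d < m) : uu n m (d + 1) = s n (m - d) * uu n m d := by
  rw [uu, uu, List.range_succ_eq_map, List.map_cons, List.map_map, List.prod_cons,
    show m - (d + 1) + 1 + 0 = m - d by omega]
  congr 2
  refine List.map_congr_left fun t _ => ?_
  simp only [Function.comp_apply]
  congr 1
  omega

lemma val_uu_apply {m d : ℕ} (hd : d ≤ m) (hm : m < n) (x : Fin n) :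
    (uu n m d x : ℕ) = if (x : ℕ) = m then m - d
      else if m - d ≤ (x : ℕ) ∧ (x : ℕ) < m then (x : ℕ) + 1 else (x : ℕ) := by
  induction d with
  | zero => simp only [uu_zero, Perm.one_apply]; split_ifs <;> omega
  | succ d ih =>
    have hy := ih (by omega)
    rw [uu_succ (by omega), Perm.mul_apply, s_eq_swap (by omega), swap_apply_def]
    split_ifs at hy ⊢ <;> simp only [Fin.ext_iff] at * <;> omega

lemma len_uu_mul {m d : ℕ} (hd : d ≤ m) (hm : m < n) {v : Perm (Fin n)}
    (hv : ∀ x : Fin n, m ≤ (x : ℕ) → v x = x) : len (uu n m d * v) = len v + d := by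
  induction d with
  | zero => rw [uu_zero, one_mul, add_zero]
  | succ d ih =>
    have hv_inv : ∀ x : Fin n, m ≤ (x : ℕ) → v⁻¹ x = x :=
      fun x hx => Perm.inv_eq_iff_eq.mpr (hv x hx).symm
    -- the new factor `s (m - d)` swaps `m - d - 1` with `m - d`, whose preimages are `< m` and `m`
    rw [uu_succ (by omega), s_eq_swap (by omega), mul_assoc,
      len_swap_mul (p := v⁻¹ ⟨m - d - 1, by omega⟩) (q := ⟨m, hm⟩), ih (by omega), add_assoc]
    · dsimp only
      omega
    · ext
      rw [Perm.mul_apply, Perm.coe_inv, apply_symm_apply, val_uu_apply (by omega) hm]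
      dsimp only
      split_ifs <;> omega
    · ext
      rw [Perm.mul_apply, hv _ le_rfl, val_uu_apply (by omega) hm]
      simp
    · exact val_apply_lt_of_forall_le_apply_eq hv_inv (by dsimp only; omega)

lemma uu_apply_of_lt {m d : ℕ} (hd : d ≤ m) {x : Fin n} (hx : m < (x : ℕ)) : uu n m d x = x := by
  ext
  rw [val_uu_apply hd (by omega)]
  split_ifs <;> omega

def uuProd (n : ℕ) [NeZero n] {m : ℕ} (j : Fin m → ℕ) : Perm (Fin n) :=
  ((List.ofFn (fun i : Fin m => uu n ((i : ℕ) + 1) (j i))).reverse).prod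

lemma uuProd_zero (j : Fin 0 → ℕ) : uuProd n j = 1 := rfl

lemma uuProd_succ {m : ℕ} (j : Fin (m + 1) → ℕ) :
    uuProd n j = uu n (m + 1) (j (Fin.last m)) * uuProd n (Fin.init j) := by
  rw [uuProd, List.ofFn_succ', List.concat_eq_append, List.reverse_concat', List.prod_cons]
  rfl

variable {m : ℕ} {j : Fin m → ℕ}

lemma uuProd_apply_of_le (hj : ∀ i, j i ≤ (i : ℕ) + 1) {x : Fin n} (hx : m + 1 ≤ (x : ℕ)) :
    uuProd n j x = x := by
  induction m with
  | zero => rfl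
  | succ m ih =>
    have hlast : j (Fin.last m) ≤ m + 1 := hj _
    rw [uuProd_succ, Perm.mul_apply, ih (j := Fin.init j) (fun i => hj _) (by omega),
      uu_apply_of_lt hlast hx]

lemma len_uuProd (hm : m < n) (hj : ∀ i, j i ≤ (i : ℕ) + 1) : len (uuProd n j) = ∑ i, j i := by
  induction m with
  | zero =>
    rw [uuProd_zero, len, Fintype.sum_empty, Finset.card_eq_zero, Finset.filter_eq_empty_iff]
    exact fun _ _ h => lt_asymm h.1 h.2
  | succ m ih =>
    have hlast : j (Fin.last m) ≤ m + 1 := hj _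
    have hinit : ∀ i, Fin.init j i ≤ (i : ℕ) + 1 := fun i => hj _
    rw [uuProd_succ, len_uu_mul hlast hm fun _ hx => uuProd_apply_of_le hinit hx,
      ih (by omega) hinit, Fin.sum_univ_castSucc]
    rfl

lemma val_uuProd_apply_last {j : Fin (m + 1) → ℕ} (hm : m + 1 < n)
    (hj : ∀ i, j i ≤ (i : ℕ) + 1) : (uuProd n j ⟨m + 1, hm⟩ : ℕ) = m + 1 - j (Fin.last m) := by
  have hlast : j (Fin.last m) ≤ m + 1 := hj _
  rw [uuProd_succ, Perm.mul_apply, uuProd_apply_of_le (j := Fin.init j) (fun i => hj _) le_rfl,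
    val_uu_apply hlast hm, if_pos rfl]

lemma eq_of_uuProd_eq (hm : m < n) {j j' : Fin m → ℕ} (hj : ∀ i, j i ≤ (i : ℕ) + 1)
    (hj' : ∀ i, j' i ≤ (i : ℕ) + 1) (h : uuProd n j = uuProd n j') : j = j' := by
  induction m with
  | zero => exact Subsingleton.elim j j'
  | succ m ih =>
    have hlast : j (Fin.last m) = j' (Fin.last m) := by
      have h_top := congrArg (fun u : Perm (Fin n) => (u ⟨m + 1, hm⟩ : ℕ)) h
      simp only [val_uuProd_apply_last hm hj, val_uuProd_apply_last hm hj'] at h_top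
      have := hj (Fin.last m)
      have := hj' (Fin.last m)
      simp only [Fin.val_last] at *
      omega
    rw [uuProd_succ, uuProd_succ, hlast, mul_right_inj] at h
    rw [← Fin.snoc_init_self j, ← Fin.snoc_init_self j',
      ih (by omega) (fun i => hj _) (fun i => hj' _) h, hlast]

lemma exists_uuProd_eq (hm : m < n) {u : Perm (Fin n)}
    (hu : ∀ x : Fin n, m + 1 ≤ (x : ℕ) → u x = x) :
    ∃ j : Fin m → ℕ, (∀ i, j i ≤ (i : ℕ) + 1) ∧ uuProd n j = u := by
  induction m generalizing u with
  | zero =>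
    refine ⟨Fin.elim0, fun i => i.elim0, ?_⟩
    ext x
    by_cases hx : 1 ≤ (x : ℕ)
    · rw [hu x hx, uuProd_zero, Perm.one_apply]
    · have := val_apply_lt_of_forall_le_apply_eq hu (x := x) (by omega)
      rw [uuProd_zero, Perm.one_apply]
      omega
  | succ m ih =>
    set top : Fin n := ⟨m + 1, hm⟩
    have h_top : (u top : ℕ) ≤ m + 1 :=
      Nat.lt_succ_iff.mp (val_apply_lt_of_forall_le_apply_eq hu (x := top) (by simp [top]))
    set d := m + 1 - u top
    set w := uu n (m + 1) d
    have hw_top : w top = u top := by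
      ext
      rw [val_uu_apply (by omega) hm, if_pos rfl]
      omega
    obtain ⟨j, hj, hjv⟩ := ih (u := w⁻¹ * u) (by omega) fun x hx => by
      rw [Perm.mul_apply, Perm.inv_eq_iff_eq]
      rcases hx.lt_or_eq with hx | hx
      · rw [hu x hx, uu_apply_of_lt (by omega) hx]
      · rw [show x = top from Fin.ext hx.symm, hw_top]
    refine ⟨Fin.snoc j d, fun i => ?_, ?_⟩
    · induction i using Fin.lastCases with
      | last => simp only [Fin.snoc_last, Fin.val_last]; omega
      | cast i => simpa only [Fin.snoc_castSucc, Fin.val_castSucc] using hj i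
    · rw [uuProd_succ, Fin.snoc_last, Fin.init_snoc, hjv, mul_inv_cancel_left]

end

/-- Canonical factorization: every `u ∈ S_n` has a unique tuple
`(j_1, …, j_{n-1})` with `0 ≤ j_m ≤ m`,
`u = u_{j_{n-1}}^{(n-1)} ⋯ u_{j_2}^{(2)} u_{j_1}^{(1)}` and `ℓ(u) = Σ j_m`. -/
theorem stmt7 (n : ℕ) [NeZero n] (u : Equiv.Perm (Fin n)) :
    ∃! j : Fin (n - 1) → ℕ, (∀ i, j i ≤ (i : ℕ) + 1) ∧
      u = ((List.ofFn (fun i : Fin (n - 1) => uu n ((i : ℕ) + 1) (j i))).reverse).prod ∧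
      len u = ∑ i, j i := by
  have hn : n - 1 < n := Nat.sub_one_lt (NeZero.ne n)
  obtain ⟨j, hj, rfl⟩ := exists_uuProd_eq hn (u := u) fun x hx => absurd x.isLt (by omega)
  exact ⟨j, ⟨hj, rfl, len_uuProd hn hj⟩,
    fun j' ⟨hj', h, _⟩ => eq_of_uuProd_eq hn hj' hj h.symm⟩
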